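/- arXiv:math/9902121 — 4 statements merged into one kernel-verified Lean document; each statement's English description precedes it below -/
import Mathlib

section
/- For m ≥ 0 and x > 0, the derivative of V_m satisfies V_m'(x) = 2x (V_m(x) - V_{m-1}(x)). -/
noncomputable def V (m x : ℝ) : ℝ :=
  if m = -1 then 1 / x
  else (1 / Real.Gamma (m + 1)) *
    ∫ u in Set.Ioi (0 : ℝ), u ^ m * Real.exp (-u) / Real.sqrt (x ^ 2 + u)

open MeasureTheory Set Filter Real Metric
open scoped Topology

lemma gam_int {p : ℝ} (hp : -1 < p) :
    IntegrableOn (fun u : ℝ => u ^ p * Real.exp (-u)) (Ioi 0) := by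
  have h := Real.GammaIntegral_convergent (show 0 < p + 1 by linarith)
  have h2 : (fun x : ℝ => Real.exp (-x) * x ^ (p + 1 - 1)) =
      fun u : ℝ => u ^ p * Real.exp (-u) := by
    funext t; rw [show p + 1 - 1 = p by ring, mul_comm]
  rwa [h2] at h

lemma int_aux {p : ℝ} (hp : -1 < p) {φ : ℝ → ℝ}
    (hφm : AEStronglyMeasurable φ (volume.restrict (Ioi 0))) (C : ℝ)
    (hφb : ∀ u ∈ Ioi (0:ℝ), ‖φ u‖ ≤ C * (u ^ p * Real.exp (-u))) :
    IntegrableOn φ (Ioi 0) := by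
  refine Integrable.mono' ((gam_int hp).const_mul C) hφm ?_
  rw [ae_restrict_iff' measurableSet_Ioi]
  exact ae_of_all _ hφb

lemma cont_rpow (p : ℝ) : ContinuousOn (fun u : ℝ => u ^ p) (Ioi 0) :=
  fun u hu => (Real.continuousAt_rpow_const u p (Or.inl (ne_of_gt hu))).continuousWithinAt

lemma cont_exp : Continuous (fun u : ℝ => Real.exp (-u)) := by continuity

lemma cont_sqrt (y : ℝ) : Continuous (fun u : ℝ => Real.sqrt (y ^ 2 + u)) :=
  Real.continuous_sqrt.comp (continuous_const.add continuous_id)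

lemma sqrt_pos_aux {y u : ℝ} (hu : 0 < u) : 0 < Real.sqrt (y ^ 2 + u) :=
  Real.sqrt_pos.2 (by positivity)

lemma sqrt_ge_aux {x u : ℝ} (hx : 0 ≤ x) (hu : 0 ≤ u) : x ≤ Real.sqrt (x ^ 2 + u) := by
  calc x = Real.sqrt (x ^ 2) := (Real.sqrt_sq hx).symm
    _ ≤ Real.sqrt (x ^ 2 + u) := Real.sqrt_le_sqrt (by linarith)

lemma asm_F (m y : ℝ) :
    AEStronglyMeasurable (fun u : ℝ => u ^ m * Real.exp (-u) / Real.sqrt (y ^ 2 + u))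
      (volume.restrict (Ioi 0)) := by
  refine ContinuousOn.aestronglyMeasurable ?_ measurableSet_Ioi
  exact ((cont_rpow m).mul cont_exp.continuousOn).div (cont_sqrt y).continuousOn
    (fun u hu => (sqrt_pos_aux hu).ne')

lemma int_div_sqrt {p x : ℝ} (hp : -1 < p) (hx : 0 < x) :
    IntegrableOn (fun u : ℝ => u ^ p * Real.exp (-u) / Real.sqrt (x ^ 2 + u)) (Ioi 0) := by
  refine int_aux hp (asm_F p x) (1/x) fun u hu => ?_
  have h0 : (0:ℝ) < u := hu
  have hfn : 0 ≤ u ^ p * Real.exp (-u) := by positivity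
  have hs : x ≤ Real.sqrt (x ^ 2 + u) := sqrt_ge_aux hx.le h0.le
  rw [Real.norm_eq_abs, abs_of_nonneg (by positivity)]
  calc u ^ p * Real.exp (-u) / Real.sqrt (x ^ 2 + u)
      ≤ u ^ p * Real.exp (-u) / x := div_le_div_of_nonneg_left hfn hx hs
    _ = 1 / x * (u ^ p * Real.exp (-u)) := by ring

-- derivative in y of (√(y²+u))
lemma hds_y {y u : ℝ} (h : 0 < y ^ 2 + u) :
    HasDerivAt (fun y : ℝ => Real.sqrt (y ^ 2 + u)) (y / Real.sqrt (y ^ 2 + u)) y := by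
  have h1 : HasDerivAt (fun y : ℝ => y ^ 2 + u) (2 * y) y := by
    simpa using (hasDerivAt_pow 2 y).add_const u
  have h2 := (Real.hasDerivAt_sqrt h.ne').comp y h1
  refine h2.congr_deriv ?_
  have : Real.sqrt (y ^ 2 + u) ≠ 0 := (Real.sqrt_pos.2 h).ne'
  field_simp

lemma hdF {m y u : ℝ} (hu : 0 < u) :
    HasDerivAt (fun y : ℝ => u ^ m * Real.exp (-u) / Real.sqrt (y ^ 2 + u))
      (-(y * (u ^ m * Real.exp (-u)) / ((y ^ 2 + u) * Real.sqrt (y ^ 2 + u)))) y := by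
  have hpos : 0 < y ^ 2 + u := by positivity
  have hsne : Real.sqrt (y ^ 2 + u) ≠ 0 := (Real.sqrt_pos.2 hpos).ne'
  have h := (hasDerivAt_const y (u ^ m * Real.exp (-u))).div (hds_y hpos) hsne
  refine h.congr_deriv ?_
  rw [Real.sq_sqrt hpos.le]
  field_simp
  ring

lemma key_deriv (m x : ℝ) (hm : 0 ≤ m) (hx : 0 < x) :
    HasDerivAt (fun y => ∫ u in Ioi (0:ℝ), u ^ m * Real.exp (-u) / Real.sqrt (y ^ 2 + u))
      (∫ u in Ioi (0:ℝ), -(x * (u ^ m * Real.exp (-u)) / ((x ^ 2 + u) * Real.sqrt (x ^ 2 + u)))) x := by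
  have hε : 0 < x / 2 := by linarith
  have main := hasDerivAt_integral_of_dominated_loc_of_deriv_le (μ := volume.restrict (Ioi 0))
    (F := fun y u => u ^ m * Real.exp (-u) / Real.sqrt (y ^ 2 + u))
    (F' := fun y u => -(y * (u ^ m * Real.exp (-u)) / ((y ^ 2 + u) * Real.sqrt (y ^ 2 + u))))
    (bound := fun u => 12 / x ^ 2 * (u ^ m * Real.exp (-u))) (x₀ := x) (ball_mem_nhds x hε)
    (Eventually.of_forall fun y => asm_F m y) (int_div_sqrt (by linarith) hx)
    ?_ ?_ ((gam_int (by linarith)).const_mul _) ?_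
  · exact main.2
  · -- measurability of F' x
    refine ContinuousOn.aestronglyMeasurable ?_ measurableSet_Ioi
    refine ContinuousOn.neg ?_
    refine ContinuousOn.div (continuous_const.continuousOn.mul ((cont_rpow m).mul cont_exp.continuousOn)) ?_ ?_
    · exact ((continuous_const.add continuous_id).mul (cont_sqrt x)).continuousOn
    · intro u hu
      have h0 : (0:ℝ) < u := hu
      have : 0 < x ^ 2 + u := by positivity
      exact (mul_pos this (sqrt_pos_aux h0)).ne'
  · -- bound
    rw [ae_restrict_iff' measurableSet_Ioi]
    refine ae_of_all _ fun u hu y hy => ?_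
    have h0 : (0:ℝ) < u := hu
    rw [mem_ball, Real.dist_eq, abs_sub_lt_iff] at hy
    have hy1 : x / 2 < y := by linarith [hy.2]
    have hy2 : y < 3 * x / 2 := by linarith [hy.1]
    have hfn : 0 ≤ u ^ m * Real.exp (-u) := by positivity
    have hsum : x ^ 2 / 4 ≤ y ^ 2 + u := by nlinarith
    have hsq : x / 2 ≤ Real.sqrt (y ^ 2 + u) := by
      calc x / 2 = Real.sqrt ((x / 2) ^ 2) := (Real.sqrt_sq (by linarith)).symm
        _ ≤ Real.sqrt (y ^ 2 + u) := Real.sqrt_le_sqrt (by nlinarith)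
    have hden : x ^ 3 / 8 ≤ (y ^ 2 + u) * Real.sqrt (y ^ 2 + u) := by
      calc x ^ 3 / 8 = x ^ 2 / 4 * (x / 2) := by ring
        _ ≤ (y ^ 2 + u) * Real.sqrt (y ^ 2 + u) :=
          mul_le_mul hsum hsq (by linarith) (by nlinarith)
    have hy0 : 0 < y := by linarith
    have hnum : 0 ≤ y * (u ^ m * Real.exp (-u)) := mul_nonneg hy0.le hfn
    rw [Real.norm_eq_abs, abs_neg, abs_of_nonneg (div_nonneg hnum (by positivity))]
    calc y * (u ^ m * Real.exp (-u)) / ((y ^ 2 + u) * Real.sqrt (y ^ 2 + u))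
        ≤ 3 * x / 2 * (u ^ m * Real.exp (-u)) / (x ^ 3 / 8) := by
          apply div_le_div₀ (by positivity) (by nlinarith) (by positivity) hden
      _ = 12 / x ^ 2 * (u ^ m * Real.exp (-u)) := by field_simp; ring
  · -- differentiability
    rw [ae_restrict_iff' measurableSet_Ioi]
    exact ae_of_all _ fun u hu y _ => hdF hu

lemma hdU {m t : ℝ} (ht : 0 < t) :
    HasDerivAt (fun t : ℝ => t ^ m * Real.exp (-t))
      (m * t ^ (m - 1) * Real.exp (-t) - t ^ m * Real.exp (-t)) t := by
  have hexp : HasDerivAt (fun t : ℝ => Real.exp (-t)) (-Real.exp (-t)) t := by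
    exact ((Real.hasDerivAt_exp (-t)).comp t (hasDerivAt_neg t)).congr_deriv (by simp)
  have h := (Real.hasDerivAt_rpow_const (p := m) (Or.inl ht.ne')).mul hexp
  refine h.congr_deriv ?_; ring

lemma hdW {x t : ℝ} (hx : 0 < x) (ht : 0 < t) :
    HasDerivAt (fun t : ℝ => -2 / Real.sqrt (x ^ 2 + t))
      (1 / ((x ^ 2 + t) * Real.sqrt (x ^ 2 + t))) t := by
  have hpos : 0 < x ^ 2 + t := by positivity
  have hsne : Real.sqrt (x ^ 2 + t) ≠ 0 := (Real.sqrt_pos.2 hpos).ne'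
  have hinner : HasDerivAt (fun t : ℝ => Real.sqrt (x ^ 2 + t))
      (1 / (2 * Real.sqrt (x ^ 2 + t))) t := by
    exact ((Real.hasDerivAt_sqrt hpos.ne').comp t ((hasDerivAt_id t).const_add (x ^ 2))).congr_deriv (by simp)
  have h := (hasDerivAt_const t (-2 : ℝ)).div hinner hsne
  refine h.congr_deriv ?_
  rw [Real.sq_sqrt hpos.le]
  field_simp
  ring

lemma gam_int' {m : ℝ} (hm : 0 ≤ m) :
    IntegrableOn (fun t : ℝ => m * (t ^ (m - 1) * Real.exp (-t))) (Ioi 0) := by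
  rcases eq_or_lt_of_le hm with h | h
  · have he : (fun t : ℝ => m * (t ^ (m - 1) * Real.exp (-t))) = fun _ => 0 := by
      funext t; rw [← h]; ring
    rw [he]; exact integrable_zero _ _ _
  · exact (gam_int (by linarith)).const_mul m

lemma ibp (m x : ℝ) (hm : 0 ≤ m) (hx : 0 < x) :
    (∫ t in Ioi (0:ℝ), t ^ m * Real.exp (-t) * (1 / ((x ^ 2 + t) * Real.sqrt (x ^ 2 + t))))
      = 0 - (0:ℝ) ^ m * (-2 / x)
        - ∫ t in Ioi (0:ℝ), (m * t ^ (m - 1) * Real.exp (-t) - t ^ m * Real.exp (-t)) *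
            (-2 / Real.sqrt (x ^ 2 + t)) := by
  have h := MeasureTheory.integral_Ioi_mul_deriv_eq_deriv_mul (a := (0:ℝ))
    (u := fun t => t ^ m * Real.exp (-t))
    (u' := fun t => m * t ^ (m - 1) * Real.exp (-t) - t ^ m * Real.exp (-t))
    (v := fun t => -2 / Real.sqrt (x ^ 2 + t))
    (v' := fun t => 1 / ((x ^ 2 + t) * Real.sqrt (x ^ 2 + t)))
    (a' := (0:ℝ) ^ m * (-2 / x)) (b' := 0)
    (fun t ht => hdU ht) (fun t ht => hdW hx ht) ?huv' ?hu'v ?h0 ?hinf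
  · simpa using h
  case huv' =>
    refine int_aux (p := m) (by linarith) ?_ (1 / x ^ 3) fun t ht => ?_
    · refine ContinuousOn.aestronglyMeasurable ?_ measurableSet_Ioi
      refine ((cont_rpow m).mul cont_exp.continuousOn).mul
        (ContinuousOn.div continuous_const.continuousOn
          (((continuous_const.add continuous_id).mul (cont_sqrt x)).continuousOn) ?_)
      intro t ht
      have h0 : (0:ℝ) < t := ht
      have : 0 < x ^ 2 + t := by positivity
      exact (mul_pos this (sqrt_pos_aux h0)).ne'
    · have h0 : (0:ℝ) < t := ht
      have hfn : 0 ≤ t ^ m * Real.exp (-t) := by positivity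
      have hden : x ^ 3 ≤ (x ^ 2 + t) * Real.sqrt (x ^ 2 + t) := by
        calc x ^ 3 = x ^ 2 * x := by ring
          _ ≤ (x ^ 2 + t) * Real.sqrt (x ^ 2 + t) :=
            mul_le_mul (by linarith) (sqrt_ge_aux hx.le h0.le) hx.le (by positivity)
      rw [Pi.mul_apply, Real.norm_eq_abs]
      rw [show (fun t : ℝ => t ^ m * Real.exp (-t)) t *
          (fun t : ℝ => 1 / ((x ^ 2 + t) * Real.sqrt (x ^ 2 + t))) t
          = t ^ m * Real.exp (-t) / ((x ^ 2 + t) * Real.sqrt (x ^ 2 + t)) by ring]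
      rw [abs_of_nonneg (div_nonneg hfn (by positivity))]
      calc t ^ m * Real.exp (-t) / ((x ^ 2 + t) * Real.sqrt (x ^ 2 + t))
          ≤ t ^ m * Real.exp (-t) / x ^ 3 := div_le_div_of_nonneg_left hfn (by positivity) hden
        _ = 1 / x ^ 3 * (t ^ m * Real.exp (-t)) := by ring
  case hu'v =>
    refine Integrable.mono'
      (((gam_int' hm).const_mul (2 / x)).add
        ((gam_int (show (-1:ℝ) < m by linarith)).const_mul (2 / x))) ?_ ?_
    · refine ContinuousOn.aestronglyMeasurable ?_ measurableSet_Ioi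
      refine ContinuousOn.mul ?_ ?_
      · exact ((continuous_const.continuousOn.mul (cont_rpow (m - 1))).mul
          cont_exp.continuousOn).sub ((cont_rpow m).mul cont_exp.continuousOn)
      · exact ContinuousOn.div continuous_const.continuousOn (cont_sqrt x).continuousOn
          (fun t ht => (sqrt_pos_aux ht).ne')
    · rw [ae_restrict_iff' measurableSet_Ioi]
      refine ae_of_all _ fun t ht => ?_
      have h0 : (0:ℝ) < t := ht
      have hs0 : 0 < Real.sqrt (x ^ 2 + t) := sqrt_pos_aux h0
      have hW : |(-2 : ℝ) / Real.sqrt (x ^ 2 + t)| ≤ 2 / x := by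
        rw [abs_div, abs_of_pos hs0, show |(-2:ℝ)| = 2 by norm_num]
        exact div_le_div_of_nonneg_left (by norm_num) hx (sqrt_ge_aux hx.le h0.le)
      have hU : |m * t ^ (m - 1) * Real.exp (-t) - t ^ m * Real.exp (-t)|
          ≤ m * (t ^ (m - 1) * Real.exp (-t)) + t ^ m * Real.exp (-t) := by
        refine (abs_sub _ _).trans ?_
        rw [abs_of_nonneg (by positivity), abs_of_nonneg (by positivity)]
        apply le_of_eq; ring
      rw [Pi.mul_apply, Real.norm_eq_abs, abs_mul]
      calc |m * t ^ (m - 1) * Real.exp (-t) - t ^ m * Real.exp (-t)| *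
            |(-2 : ℝ) / Real.sqrt (x ^ 2 + t)|
          ≤ (m * (t ^ (m - 1) * Real.exp (-t)) + t ^ m * Real.exp (-t)) * (2 / x) :=
            mul_le_mul hU hW (abs_nonneg _) (by positivity)
        _ = 2 / x * (m * (t ^ (m - 1) * Real.exp (-t))) + 2 / x * (t ^ m * Real.exp (-t)) := by
            ring
  case h0 =>
    have hc : ContinuousAt
        (fun t : ℝ => t ^ m * Real.exp (-t) * (-2 / Real.sqrt (x ^ 2 + t))) 0 := by
      have c1 : ContinuousAt (fun t : ℝ => t ^ m) 0 :=
        Real.continuousAt_rpow_const 0 m (Or.inr hm)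
      have c2 : ContinuousAt (fun t : ℝ => Real.exp (-t)) 0 := cont_exp.continuousAt
      have c3 : ContinuousAt (fun t : ℝ => -2 / Real.sqrt (x ^ 2 + t)) 0 := by
        refine ContinuousAt.div continuousAt_const (cont_sqrt x).continuousAt ?_
        rw [add_zero, Real.sqrt_sq hx.le]; exact hx.ne'
      exact (c1.mul c2).mul c3
    have hval : (fun t : ℝ => t ^ m * Real.exp (-t) * (-2 / Real.sqrt (x ^ 2 + t))) 0
        = (0:ℝ) ^ m * (-2 / x) := by
      norm_num [Real.sqrt_sq hx.le]
    have h2 : Tendsto (fun t : ℝ => t ^ m * Real.exp (-t) * (-2 / Real.sqrt (x ^ 2 + t)))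
        (𝓝[>] (0:ℝ)) (𝓝 ((0:ℝ) ^ m * (-2 / x))) := by
      rw [← hval]
      exact hc.tendsto.mono_left nhdsWithin_le_nhds
    exact h2
  case hinf =>
    apply squeeze_zero_norm' (a := fun t : ℝ => 2 / x * (t ^ m * Real.exp (-t)))
    · filter_upwards [eventually_ge_atTop (0:ℝ)] with t ht
      rcases eq_or_lt_of_le ht with h | h0
      · rw [Pi.mul_apply, Real.norm_eq_abs, ← h]
        have : (0:ℝ) ^ m * Real.exp (-(0:ℝ)) * (-2 / Real.sqrt (x ^ 2 + 0)) =
            (0:ℝ) ^ m * (-2 / x) := by norm_num [Real.sqrt_sq hx.le]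
        rw [this, abs_mul]
        have h1 : |(0:ℝ) ^ m| = (0:ℝ) ^ m := abs_of_nonneg (Real.rpow_nonneg le_rfl m)
        have h2 : |(-2:ℝ) / x| = 2 / x := by
          rw [abs_div, abs_of_pos hx]; norm_num
        rw [h1, h2]
        have : (0:ℝ) ^ m * (2 / x) ≤ 2 / x * ((0:ℝ) ^ m * Real.exp (-(0:ℝ))) := by
          norm_num; apply le_of_eq; ring
        simpa using this
      · have hs0 : 0 < Real.sqrt (x ^ 2 + t) := sqrt_pos_aux h0
        have hfn : 0 ≤ t ^ m * Real.exp (-t) := by positivity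
        rw [Pi.mul_apply, Real.norm_eq_abs, abs_mul, abs_of_nonneg hfn]
        have hW : |(-2 : ℝ) / Real.sqrt (x ^ 2 + t)| ≤ 2 / x := by
          rw [abs_div, abs_of_pos hs0, show |(-2:ℝ)| = 2 by norm_num]
          exact div_le_div_of_nonneg_left (by norm_num) hx (sqrt_ge_aux hx.le h0.le)
        calc t ^ m * Real.exp (-t) * |(-2 : ℝ) / Real.sqrt (x ^ 2 + t)|
            ≤ t ^ m * Real.exp (-t) * (2 / x) := by
              exact mul_le_mul_of_nonneg_left hW hfn
          _ = 2 / x * (t ^ m * Real.exp (-t)) := by ring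
    · have h := (tendsto_rpow_mul_exp_neg_mul_atTop_nhds_zero m 1 one_pos).const_mul (2 / x)
      simpa using h


theorem stmt_4 (m x : ℝ) (hm : 0 ≤ m) (hx : 0 < x) :
    deriv (fun y => V m y) x = 2 * x * (V m x - V (m - 1) x) := by
  have hm1 : m ≠ -1 := by linarith
  have hΓpos : 0 < Real.Gamma (m + 1) := Real.Gamma_pos_of_pos (by linarith)
  have key := key_deriv m x hm hx
  have hVfun : (fun y => V m y) = fun y => (1 / Real.Gamma (m + 1)) *
      ∫ u in Ioi (0:ℝ), u ^ m * Real.exp (-u) / Real.sqrt (y ^ 2 + u) := by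
    funext y; simp [V, hm1]
  have hD : HasDerivAt (fun y => V m y) ((1 / Real.Gamma (m + 1)) *
      ∫ u in Ioi (0:ℝ), -(x * (u ^ m * Real.exp (-u)) / ((x ^ 2 + u) * Real.sqrt (x ^ 2 + u)))) x := by
    rw [hVfun]; exact key.const_mul _
  rw [hD.deriv]
  have hJ1 : (∫ u in Ioi (0:ℝ), -(x * (u ^ m * Real.exp (-u)) / ((x ^ 2 + u) * Real.sqrt (x ^ 2 + u))))
      = -x * ∫ t in Ioi (0:ℝ), t ^ m * Real.exp (-t) * (1 / ((x ^ 2 + t) * Real.sqrt (x ^ 2 + t))) := by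
    rw [← integral_const_mul]
    congr 1; funext u; ring
  rw [hJ1, ibp m x hm hx]
  have hsplit : (∫ t in Ioi (0:ℝ), (m * t ^ (m - 1) * Real.exp (-t) - t ^ m * Real.exp (-t)) *
      (-2 / Real.sqrt (x ^ 2 + t)))
      = (-2 * m) * (∫ t in Ioi (0:ℝ), t ^ (m - 1) * Real.exp (-t) / Real.sqrt (x ^ 2 + t))
        + 2 * ∫ u in Ioi (0:ℝ), u ^ m * Real.exp (-u) / Real.sqrt (x ^ 2 + u) := by
    rw [← integral_const_mul, ← integral_const_mul, ← integral_add ?i1 ?i2]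
    · congr 1; funext t; ring
    case i1 =>
      rcases eq_or_lt_of_le hm with h | h
      · have hz : (fun t : ℝ => -2 * m * (t ^ (m - 1) * Real.exp (-t) / Real.sqrt (x ^ 2 + t)))
            = fun _ => 0 := by
          funext t; rw [← h]; ring
        rw [hz]; exact integrable_zero _ _ _
      · exact (int_div_sqrt (by linarith) hx).const_mul _
    case i2 => exact (int_div_sqrt (by linarith) hx).const_mul _
  rw [hsplit]
  rcases eq_or_lt_of_le hm with h0 | h0
  · -- m = 0
    have hmz : m = 0 := h0.symm
    subst hmz
    have hVm1 : V (0 - 1) x = 1 / x := by norm_num [V]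
    have hV0 : V 0 x = ∫ u in Ioi (0:ℝ), u ^ (0:ℝ) * Real.exp (-u) / Real.sqrt (x ^ 2 + u) := by
      simp [V, Real.Gamma_one]
    rw [hVm1, hV0]
    norm_num [Real.Gamma_one]
    field_simp
    ring
  · -- m > 0
    have hz : (0:ℝ) ^ m = 0 := Real.zero_rpow h0.ne'
    have hΓm : Real.Gamma m ≠ 0 := (Real.Gamma_pos_of_pos h0).ne'
    have hA : (∫ t in Ioi (0:ℝ), t ^ (m - 1) * Real.exp (-t) / Real.sqrt (x ^ 2 + t))
        = Real.Gamma m * V (m - 1) x := by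
      have hne : m - 1 ≠ -1 := by intro hc; exact h0.ne' (by linarith)
      rw [V, if_neg hne, show m - 1 + 1 = m by ring]
      field_simp
    have hBv : (∫ u in Ioi (0:ℝ), u ^ m * Real.exp (-u) / Real.sqrt (x ^ 2 + u))
        = Real.Gamma (m + 1) * V m x := by
      rw [V, if_neg hm1]; field_simp
    have hΓ1 : Real.Gamma (m + 1) = m * Real.Gamma m := Real.Gamma_add_one h0.ne'
    rw [hz, hA, hBv, hΓ1]
    field_simp
    ring
end

section
/- For m ≥ 1, p > 0, x > 0, the recursion V_m^p(x) = (1/m) [ (m - 1 + 1/p - x^p) V_{m-1}^p(x) + x^p V_{m-2}^p(x) ] holds. -/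
open MeasureTheory Real Set Filter Topology


lemma base_int (s : ℝ) (hs : -1 < s) :
    IntegrableOn (fun u : ℝ => u ^ s * Real.exp (-u)) (Ioi 0) := by
  have := integrableOn_rpow_mul_exp_neg_mul_rpow (p := 1) hs zero_lt_one zero_lt_one
  simpa using this

lemma hint (a k r : ℝ) (ha : 0 < a) (hk : -1 < k) :
    IntegrableOn (fun u : ℝ => u ^ k * (u + a) ^ r * Real.exp (-u)) (Ioi 0) := by
  have hmeas : AEStronglyMeasurable (fun u : ℝ => u ^ k * (u + a) ^ r * Real.exp (-u))
      (volume.restrict (Ioi 0)) := by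
    apply ContinuousOn.aestronglyMeasurable _ measurableSet_Ioi
    intro u hu
    have hu0 : (0:ℝ) < u := hu
    have hua : (0:ℝ) < u + a := by linarith
    exact (((continuousAt_rpow_const _ _ (Or.inl hu0.ne')).continuousWithinAt).mul
      (((continuous_id.add continuous_const).continuousWithinAt).rpow_const
        (Or.inl hua.ne'))).mul (Real.continuous_exp.comp continuous_neg).continuousWithinAt
  rcases le_or_gt r 0 with hr | hr
  · apply Integrable.mono' ((base_int k hk).const_mul (a ^ r)) hmeas
    rw [ae_restrict_iff' measurableSet_Ioi]
    filter_upwards with u hu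
    have hu0 : (0:ℝ) < u := hu
    have hua : (0:ℝ) < u + a := by linarith
    have h1 : (u + a) ^ r ≤ a ^ r := rpow_le_rpow_of_nonpos ha (by linarith) hr
    have hk0 : (0:ℝ) ≤ u ^ k := (rpow_pos_of_pos hu0 k).le
    have he : (0:ℝ) < Real.exp (-u) := Real.exp_pos _
    rw [Real.norm_eq_abs, abs_of_nonneg (by positivity)]
    calc u ^ k * (u + a) ^ r * Real.exp (-u) ≤ u ^ k * a ^ r * Real.exp (-u) := by
          apply mul_le_mul_of_nonneg_right (mul_le_mul_of_nonneg_left h1 hk0) he.le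
      _ = a ^ r * (u ^ k * Real.exp (-u)) := by ring
  · have hkr : -1 < k + r := by linarith
    set C := (1 + a) ^ r * 2 ^ r with hC
    apply Integrable.mono'
      (((base_int k hk).const_mul C).add ((base_int (k + r) hkr).const_mul C)) hmeas
    rw [ae_restrict_iff' measurableSet_Ioi]
    filter_upwards with u hu
    have hu0 : (0:ℝ) < u := hu
    have hua : (0:ℝ) < u + a := by linarith
    have hC0 : 0 < C := by positivity
    have h1 : (u + a) ^ r ≤ C * (1 + u ^ r) := by
      have e1 : (u + a) ^ r ≤ ((1 + a) * (1 + u)) ^ r := by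
        apply rpow_le_rpow hua.le (by nlinarith) hr.le
      have e2 : ((1 + a) * (1 + u)) ^ r = (1 + a) ^ r * (1 + u) ^ r :=
        mul_rpow (by linarith) (by linarith)
      have e3 : (1 + u) ^ r ≤ (2 * max 1 u) ^ r := by
        apply rpow_le_rpow (by linarith) _ hr.le
        rcases le_total u 1 with h | h
        · simp [max_eq_left h]; linarith
        · rw [max_eq_right h]; linarith
      have e4 : (2 * max 1 u) ^ r = 2 ^ r * (max 1 u) ^ r :=
        mul_rpow (by norm_num) (by positivity)
      have e5 : (max 1 u) ^ r ≤ 1 + u ^ r := by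
        rcases le_total u 1 with h | h
        · rw [max_eq_left h, one_rpow]
          have := (rpow_pos_of_pos hu0 r).le
          linarith
        · rw [max_eq_right h]
          have : (0:ℝ) ≤ 1 := zero_le_one
          linarith [rpow_pos_of_pos hu0 r]
      calc (u + a) ^ r ≤ (1 + a) ^ r * (1 + u) ^ r := by rw [← e2]; exact e1
        _ ≤ (1 + a) ^ r * (2 ^ r * (max 1 u) ^ r) := by
            apply mul_le_mul_of_nonneg_left _ (by positivity)
            rw [← e4]; exact e3
        _ ≤ (1 + a) ^ r * (2 ^ r * (1 + u ^ r)) := by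
            apply mul_le_mul_of_nonneg_left _ (by positivity)
            exact mul_le_mul_of_nonneg_left e5 (by positivity)
        _ = C * (1 + u ^ r) := by rw [hC]; ring
    have hk0 : (0:ℝ) ≤ u ^ k := (rpow_pos_of_pos hu0 k).le
    have he : (0:ℝ) < Real.exp (-u) := Real.exp_pos _
    rw [Real.norm_eq_abs, abs_of_nonneg (by positivity)]
    have hadd : u ^ (k + r) = u ^ k * u ^ r := rpow_add hu0 k r
    calc u ^ k * (u + a) ^ r * Real.exp (-u)
        ≤ u ^ k * (C * (1 + u ^ r)) * Real.exp (-u) := by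
          apply mul_le_mul_of_nonneg_right (mul_le_mul_of_nonneg_left h1 hk0) he.le
      _ = C * (u ^ k * Real.exp (-u)) + C * (u ^ (k + r) * Real.exp (-u)) := by
          rw [hadd]; ring


lemma image_lem (p x : ℝ) (hp : 0 < p) (hx : 0 < x) :
    (fun u : ℝ => (u + x ^ p) ^ (1/p)) '' (Ioi 0) = Ioi x := by
  ext t
  constructor
  · rintro ⟨u, hu, rfl⟩
    have hu0 : (0:ℝ) < u := hu
    have ha : (0:ℝ) < x ^ p := rpow_pos_of_pos hx p
    have hxx : (x ^ p) ^ (1/p) = x := by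
      rw [← Real.rpow_mul hx.le, mul_one_div, div_self hp.ne', rpow_one]
    have h1 : (x ^ p) ^ (1/p) < (u + x ^ p) ^ (1/p) :=
      rpow_lt_rpow ha.le (by linarith) (by positivity)
    rw [hxx] at h1
    exact h1
  · intro ht
    have ht0 : x < t := ht
    have htpos : 0 < t := hx.trans ht0
    refine ⟨t ^ p - x ^ p, ?_, ?_⟩
    · have : x ^ p < t ^ p := rpow_lt_rpow hx.le ht0 hp
      simpa using this
    · simp only [sub_add_cancel]
      rw [← Real.rpow_mul htpos.le, mul_one_div, div_self hp.ne', rpow_one]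

lemma subst_lem (p x k : ℝ) (hp : 0 < p) (hx : 0 < x) :
    ∫ t in Ioi x, (t ^ p - x ^ p) ^ k * Real.exp (-(t ^ p)) =
      (Real.exp (-(x ^ p)) / p) * ∫ u in Ioi 0, u ^ k * (u + x ^ p) ^ (1/p - 1) * Real.exp (-u) := by
  have ha : (0:ℝ) < x ^ p := rpow_pos_of_pos hx p
  have hderiv : ∀ u ∈ Ioi (0:ℝ), HasDerivWithinAt (fun u : ℝ => (u + x ^ p) ^ (1/p))
      ((1/p) * (u + x ^ p) ^ (1/p - 1)) (Ioi 0) u := by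
    intro u hu
    have hua : (0:ℝ) < u + x ^ p := by have : (0:ℝ) < u := hu; linarith
    have h1 : HasDerivAt (fun u : ℝ => u + x ^ p) 1 u := (hasDerivAt_id u).add_const _
    have := (Real.hasDerivAt_rpow_const (p := 1/p) (Or.inl hua.ne')).comp u h1
    simpa [mul_comm, Function.comp_def] using this.hasDerivWithinAt
  have hinj : InjOn (fun u : ℝ => (u + x ^ p) ^ (1/p)) (Ioi 0) := by
    intro u hu v hv h
    have hu0 : (0:ℝ) < u := hu
    have hv0 : (0:ℝ) < v := hv
    simp only at h
    have h2 : ((u + x ^ p) ^ (1/p)) ^ p = ((v + x ^ p) ^ (1/p)) ^ p := by rw [h]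
    rw [← Real.rpow_mul (by linarith), ← Real.rpow_mul (by linarith),
      one_div_mul_cancel hp.ne', rpow_one, rpow_one] at h2
    linarith
  have := integral_image_eq_integral_abs_deriv_smul measurableSet_Ioi hderiv hinj
    (fun t => (t ^ p - x ^ p) ^ k * Real.exp (-(t ^ p)))
  rw [image_lem p x hp hx] at this
  rw [this]
  rw [← integral_const_mul]
  apply setIntegral_congr_fun measurableSet_Ioi
  intro u hu
  have hu0 : (0:ℝ) < u := hu
  have hua : (0:ℝ) < u + x ^ p := by linarith
  have hpow : ((u + x ^ p) ^ (1/p)) ^ p = u + x ^ p := by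
    rw [← Real.rpow_mul hua.le, one_div_mul_cancel hp.ne', rpow_one]
  have habs : |1/p * (u + x ^ p) ^ (1/p - 1)| = 1/p * (u + x ^ p) ^ (1/p - 1) := by
    apply abs_of_pos; positivity
  simp only [smul_eq_mul, habs, hpow, add_sub_cancel_right]
  rw [Real.exp_neg, Real.exp_neg, Real.exp_neg, Real.exp_add]
  field_simp


lemma G_deriv (a c m : ℝ) (ha : 0 < a) (u : ℝ) (hu : 0 < u) :
    HasDerivAt (fun u : ℝ => u ^ (m-1) * (u + a) ^ c * Real.exp (-u))
      ((m-1) * (u ^ (m-2) * (u + a) ^ c * Real.exp (-u))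
        + c * (u ^ (m-1) * (u + a) ^ (c-1) * Real.exp (-u))
        - u ^ (m-1) * (u + a) ^ c * Real.exp (-u)) u := by
  have hua : (0:ℝ) < u + a := by linarith
  have h1 : HasDerivAt (fun u : ℝ => u ^ (m-1)) ((m-1) * u ^ (m-1-1)) u :=
    Real.hasDerivAt_rpow_const (Or.inl hu.ne')
  have h2 : HasDerivAt (fun u : ℝ => (u + a) ^ c) (1 * c * (u + a) ^ (c-1)) u :=
    ((hasDerivAt_id u).add_const a).rpow_const (Or.inl hua.ne')
  have h3 : HasDerivAt (fun u : ℝ => Real.exp (-u)) (Real.exp (-u) * (-1)) u :=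
    (hasDerivAt_neg u).exp
  have := (h1.mul h2).mul h3
  simp only [Pi.mul_def] at this
  have e : m - 1 - 1 = m - 2 := by ring
  rw [e] at this
  refine this.congr_deriv ?_
  ring

lemma G_tendsto (a c m : ℝ) (ha : 0 < a) (hc : 0 < c) :
    Tendsto (fun u : ℝ => u ^ (m-1) * (u + a) ^ c * Real.exp (-u)) atTop (𝓝 0) := by
  have hup : Tendsto (fun u : ℝ => 2 ^ c * (u ^ (m-1+c) * Real.exp (-u))) atTop (𝓝 0) := by
    have := (tendsto_rpow_mul_exp_neg_mul_atTop_nhds_zero (m-1+c) 1 zero_lt_one).const_mul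
      ((2:ℝ) ^ c)
    simpa using this
  apply tendsto_of_tendsto_of_tendsto_of_le_of_le' tendsto_const_nhds hup
  · filter_upwards [eventually_gt_atTop (0:ℝ)] with u hu
    positivity
  · filter_upwards [eventually_ge_atTop (max a 1)] with u hu
    have hu1 : (1:ℝ) ≤ u := le_trans (le_max_right a 1) hu
    have hua : a ≤ u := le_trans (le_max_left a 1) hu
    have hu0 : (0:ℝ) < u := by linarith
    have h1 : (u + a) ^ c ≤ (2 * u) ^ c := rpow_le_rpow (by linarith) (by linarith) hc.le
    have h2 : (2 * u) ^ c = 2 ^ c * u ^ c := mul_rpow (by norm_num) hu0.le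
    have h3 : u ^ (m-1) * u ^ c = u ^ (m-1+c) := (rpow_add hu0 _ _).symm
    calc u ^ (m-1) * (u + a) ^ c * Real.exp (-u)
        ≤ u ^ (m-1) * (2 ^ c * u ^ c) * Real.exp (-u) := by
          apply mul_le_mul_of_nonneg_right _ (Real.exp_pos _).le
          apply mul_le_mul_of_nonneg_left _ (rpow_pos_of_pos hu0 _).le
          rw [← h2]; exact h1
      _ = 2 ^ c * (u ^ (m-1+c) * Real.exp (-u)) := by rw [← h3]; ring

lemma G_cont (a c m : ℝ) (ha : 0 < a) (hm : 1 ≤ m) :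
    ContinuousWithinAt (fun u : ℝ => u ^ (m-1) * (u + a) ^ c * Real.exp (-u)) (Ici 0) 0 := by
  apply ContinuousWithinAt.mul
  apply ContinuousWithinAt.mul
  · rcases eq_or_lt_of_le hm with h | h
    · have : (fun u : ℝ => u ^ (m-1)) = fun _ : ℝ => (1:ℝ) := by
        funext u; rw [← h]; simp
      rw [this]; exact continuousWithinAt_const
    · exact (Real.continuousAt_rpow_const 0 (m-1) (Or.inr (by linarith))).continuousWithinAt
  · exact (((continuous_id.add continuous_const).continuousAt).rpow_const
      (Or.inl (by simp [ha.ne']))).continuousWithinAt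
  · exact (Real.continuous_exp.comp continuous_neg).continuousWithinAt

lemma split_c (a c k : ℝ) (ha : 0 < a) (hk : -1 < k) :
    ∫ u in Ioi 0, u ^ k * (u + a) ^ c * Real.exp (-u)
      = (∫ u in Ioi 0, u ^ (k+1) * (u + a) ^ (c-1) * Real.exp (-u))
        + a * ∫ u in Ioi 0, u ^ k * (u + a) ^ (c-1) * Real.exp (-u) := by
  rw [← integral_const_mul, ← integral_add (hint a (k+1) (c-1) ha (by linarith))
    ((hint a k (c-1) ha hk).const_mul a)]
  apply setIntegral_congr_fun measurableSet_Ioi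
  intro u hu
  dsimp only
  have hu0 : (0:ℝ) < u := hu
  have hua : (0:ℝ) < u + a := by linarith
  have e1 : (u + a) ^ c = (u + a) ^ (c-1) * (u + a) := by
    rw [← Real.rpow_add_one hua.ne' (c-1)]; norm_num
  have e2 : u ^ (k+1) = u ^ k * u := Real.rpow_add_one hu0.ne' k
  rw [e1, e2]; ring

lemma J_rec (a c m : ℝ) (ha : 0 < a) (hc : 0 < c) (hm : 1 ≤ m) :
    (∫ u in Ioi 0, u ^ m * (u + a) ^ (c-1) * Real.exp (-u))
      = (m - 1 + c - a) * (∫ u in Ioi 0, u ^ (m-1) * (u + a) ^ (c-1) * Real.exp (-u))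
        + (m - 1) * a * (∫ u in Ioi 0, u ^ (m-2) * (u + a) ^ (c-1) * Real.exp (-u))
        + (if m = 1 then a ^ c else 0) := by
  have t2 : IntegrableOn (fun u : ℝ => c * (u ^ (m-1) * (u + a) ^ (c-1) * Real.exp (-u)))
      (Ioi 0) := (hint a (m-1) (c-1) ha (by linarith)).const_mul c
  have t3 : IntegrableOn (fun u : ℝ => u ^ (m-1) * (u + a) ^ c * Real.exp (-u)) (Ioi 0) :=
    hint a (m-1) c ha (by linarith)
  have t1 : IntegrableOn (fun u : ℝ => (m-1) * (u ^ (m-2) * (u + a) ^ c * Real.exp (-u)))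
      (Ioi 0) := by
    rcases eq_or_lt_of_le hm with h | h
    · rw [← h]
      norm_num
    · exact (hint a (m-2) c ha (by linarith)).const_mul _
  have key : (∫ u in Ioi 0, ((m-1) * (u ^ (m-2) * (u + a) ^ c * Real.exp (-u))
        + c * (u ^ (m-1) * (u + a) ^ (c-1) * Real.exp (-u))
        - u ^ (m-1) * (u + a) ^ c * Real.exp (-u)))
      = 0 - ((0:ℝ) ^ (m-1) * ((0:ℝ) + a) ^ c * Real.exp (-(0:ℝ))) := by
    exact integral_Ioi_of_hasDerivAt_of_tendsto (G_cont a c m ha hm)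
      (fun u hu => G_deriv a c m ha u hu) ((t1.add t2).sub t3) (G_tendsto a c m ha hc)
  have hsplit := integral_sub (t1.add t2) t3
  simp only [Pi.add_apply] at hsplit
  rw [integral_add t1 t2] at hsplit
  rw [hsplit, integral_const_mul, integral_const_mul] at key
  -- expand the (u+a)^c integrals
  have E3 : (∫ u in Ioi 0, u ^ (m-1) * (u + a) ^ c * Real.exp (-u))
      = (∫ u in Ioi 0, u ^ m * (u + a) ^ (c-1) * Real.exp (-u))
        + a * ∫ u in Ioi 0, u ^ (m-1) * (u + a) ^ (c-1) * Real.exp (-u) := by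
    have := split_c a c (m-1) ha (by linarith)
    have e : m - 1 + 1 = m := by ring
    rwa [e] at this
  rcases eq_or_lt_of_le hm with h | h
  · -- m = 1
    rw [← h] at key E3 ⊢
    norm_num at key E3 ⊢
    linarith
  · -- m > 1
    have E1 : (∫ u in Ioi 0, u ^ (m-2) * (u + a) ^ c * Real.exp (-u))
        = (∫ u in Ioi 0, u ^ (m-1) * (u + a) ^ (c-1) * Real.exp (-u))
          + a * ∫ u in Ioi 0, u ^ (m-2) * (u + a) ^ (c-1) * Real.exp (-u) := by
      have := split_c a (c) (m-2) ha (by linarith)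
      have e : m - 2 + 1 = m - 1 := by ring
      rwa [e] at this
    rw [if_neg (by linarith : m ≠ 1)]
    have h0 : (0:ℝ) ^ (m-1) = 0 := Real.zero_rpow (by linarith : m - 1 ≠ 0)
    rw [h0] at key
    rw [E1, E3] at key
    linarith [key]

noncomputable def Vp (p m x : ℝ) : ℝ :=
  if m = -1 then x ^ (1 - p)
  else (p * Real.exp (x ^ p) / Real.Gamma (m + 1)) *
    ∫ t in Set.Ioi x, (t ^ p - x ^ p) ^ m * Real.exp (-(t ^ p))

lemma Vp_eq (p x k : ℝ) (hp : 0 < p) (hx : 0 < x) (hk : k ≠ -1) (hk1 : -1 < k) :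
    Vp p k x = (∫ u in Ioi 0, u ^ k * (u + x ^ p) ^ (1/p - 1) * Real.exp (-u))
      / Real.Gamma (k+1) := by
  have hG : Real.Gamma (k+1) ≠ 0 := (Real.Gamma_pos_of_pos (by linarith)).ne'
  have hE : Real.exp (x ^ p) ≠ 0 := (Real.exp_pos _).ne'
  rw [Vp, if_neg hk, subst_lem p x k hp hx, Real.exp_neg]
  field_simp

theorem stmt_13 (p m x : ℝ) (hp : 0 < p) (hm : 1 ≤ m) (hx : 0 < x) :
    Vp p m x =
      (1 / m) * ((m - 1 + 1 / p - x ^ p) * Vp p (m - 1) x + x ^ p * Vp p (m - 2) x) := by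
  have ha : (0:ℝ) < x ^ p := rpow_pos_of_pos hx p
  have hc : (0:ℝ) < 1/p := by positivity
  have h0 : Vp p m x = (∫ u in Ioi 0, u ^ m * (u + x ^ p) ^ (1/p - 1) * Real.exp (-u))
      / Real.Gamma (m+1) := Vp_eq p x m hp hx (by linarith) (by linarith)
  have h1 : Vp p (m-1) x
      = (∫ u in Ioi 0, u ^ (m-1) * (u + x ^ p) ^ (1/p - 1) * Real.exp (-u))
        / Real.Gamma m := by
    have := Vp_eq p x (m-1) hp hx (by linarith) (by linarith)
    rwa [show m - 1 + 1 = m by ring] at this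
  have hrec := J_rec (x ^ p) (1/p) m ha hc hm
  rcases eq_or_lt_of_le hm with h | h
  · -- m = 1
    subst h
    have h2 : Vp p ((1:ℝ)-2) x = x ^ (1-p) := by
      rw [Vp, if_pos (by norm_num)]
    rw [h0, h1, h2]
    rw [show (1:ℝ) + 1 = 2 by norm_num, Real.Gamma_two, show (1:ℝ) - 1 = 0 by norm_num,
      show Real.Gamma 1 = 1 from Real.Gamma_one]
    rw [if_pos rfl] at hrec
    have hxc : (x ^ p) ^ (1/p : ℝ) = x := by
      rw [← Real.rpow_mul hx.le, mul_one_div, div_self hp.ne', rpow_one]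
    have hx1p : x ^ p * x ^ (1-p) = x := by
      rw [← Real.rpow_add hx, add_sub_cancel, rpow_one]
    rw [hxc] at hrec
    norm_num at hrec ⊢
    rw [hrec]
    linarith [hx1p]
  · -- m > 1
    have h2 : Vp p (m-2) x
        = (∫ u in Ioi 0, u ^ (m-2) * (u + x ^ p) ^ (1/p - 1) * Real.exp (-u))
          / Real.Gamma (m-1) := by
      have := Vp_eq p x (m-2) hp hx (by linarith) (by linarith)
      rwa [show m - 2 + 1 = m - 1 by ring] at this
    rw [if_neg (by linarith : m ≠ 1), add_zero] at hrec
    have hG1 : (0:ℝ) < Real.Gamma (m-1) := Real.Gamma_pos_of_pos (by linarith)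
    have hGm : Real.Gamma m = (m-1) * Real.Gamma (m-1) := by
      have := Real.Gamma_add_one (s := m-1) (by intro hh; rw [sub_eq_zero] at hh; linarith)
      rwa [show m - 1 + 1 = m by ring] at this
    have hGm1 : Real.Gamma (m+1) = m * Real.Gamma m := Real.Gamma_add_one (by linarith)
    rw [h0, h1, h2, hGm1, hGm, hrec]
    have hm0 : m ≠ 0 := by linarith
    have hm1 : m - 1 ≠ 0 := by intro hh; rw [sub_eq_zero] at hh; linarith
    field_simp
end

section
/- For integer m ≥ 1, p > 0, x > 0: V_m^p(x) = (1/(pm)) [ (1 - p x^p) V_{m-1}^p(x) + ∑_{k=0}^{m-2} V_k^p(x) + p x^p V_{-1}^p(x) ]. -/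
open Real MeasureTheory Set Filter Topology


noncomputable def Gf (p x : ℝ) (m : ℕ) (t : ℝ) : ℝ := (t ^ p - x ^ p) ^ m * Real.exp (-(t ^ p))

lemma tendsto_aux {p : ℝ} (hp : 0 < p) (s : ℝ) :
    Tendsto (fun t : ℝ => t ^ s * Real.exp (-(t ^ p))) atTop (𝓝 0) := by
  have h := (tendsto_rpow_mul_exp_neg_mul_atTop_nhds_zero (s / p) 1 one_pos).comp
    (tendsto_rpow_atTop hp)
  refine h.congr' ?_
  filter_upwards [eventually_gt_atTop (0:ℝ)] with t ht
  simp only [Function.comp_apply]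
  rw [← Real.rpow_mul ht.le, mul_div_cancel₀ _ hp.ne', neg_one_mul]

lemma sub_rpow_nonneg {p x : ℝ} (hp : 0 < p) (hx : 0 < x) {t : ℝ} (ht : x ≤ t) :
    0 ≤ t ^ p - x ^ p :=
  sub_nonneg.2 (Real.rpow_le_rpow hx.le ht hp.le)

lemma Gf_le {p x : ℝ} (hp : 0 < p) (hx : 0 < x) (m : ℕ) {t : ℝ} (ht : x ≤ t) :
    Gf p x m t ≤ t ^ (p * m) * Real.exp (-(t ^ p)) := by
  have h0 : (0:ℝ) < t := lt_of_lt_of_le hx ht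
  have h1 : (t ^ p - x ^ p) ^ m ≤ (t ^ p) ^ m :=
    pow_le_pow_left₀ (sub_rpow_nonneg hp hx ht) (sub_le_self _ (Real.rpow_nonneg hx.le p)) m
  calc Gf p x m t ≤ (t ^ p) ^ m * Real.exp (-(t ^ p)) :=
        mul_le_mul_of_nonneg_right h1 (Real.exp_nonneg _)
    _ = t ^ (p * m) * Real.exp (-(t ^ p)) := by
        rw [← Real.rpow_natCast (t ^ p) m, ← Real.rpow_mul h0.le]

lemma Gf_nonneg {p x : ℝ} (hp : 0 < p) (hx : 0 < x) (m : ℕ) {t : ℝ} (ht : x ≤ t) :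
    0 ≤ Gf p x m t :=
  mul_nonneg (pow_nonneg (sub_rpow_nonneg hp hx ht) m) (Real.exp_nonneg _)

lemma rpow_contOn {p x : ℝ} (hx : 0 < x) :
    ContinuousOn (fun t : ℝ => t ^ p) (Set.Ici x) :=
  continuousOn_id.rpow_const (fun t ht => Or.inl (ne_of_gt (lt_of_lt_of_le hx ht)))

lemma contOn {p x : ℝ} (hx : 0 < x) (m : ℕ) : ContinuousOn (Gf p x m) (Set.Ici x) :=
  (((rpow_contOn hx).sub continuousOn_const).pow m).mul
    (Real.continuous_exp.comp_continuousOn (rpow_contOn hx).neg)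

lemma bigO_G {p x : ℝ} (hp : 0 < p) (hx : 0 < x) (m : ℕ) :
    Gf p x m =O[atTop] fun t : ℝ => t ^ (-2 : ℝ) := by
  apply Asymptotics.IsLittleO.isBigO
  apply Asymptotics.isLittleO_of_tendsto'
  · filter_upwards [eventually_gt_atTop (0:ℝ)] with t ht h
    exact absurd h (by positivity)
  · apply squeeze_zero' (g := fun t : ℝ => t ^ (p * m + 2) * Real.exp (-(t ^ p)))
    · filter_upwards [eventually_ge_atTop x] with t ht
      have h0 : (0:ℝ) < t := lt_of_lt_of_le hx ht
      exact div_nonneg (Gf_nonneg hp hx m ht) (by positivity)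
    · filter_upwards [eventually_ge_atTop x] with t ht
      have h0 : (0:ℝ) < t := lt_of_lt_of_le hx ht
      rw [Real.rpow_neg h0.le, div_inv_eq_mul, Real.rpow_add h0]
      calc Gf p x m t * t ^ (2:ℝ)
          ≤ (t ^ (p * m) * Real.exp (-(t ^ p))) * t ^ (2:ℝ) :=
            mul_le_mul_of_nonneg_right (Gf_le hp hx m ht) (by positivity)
        _ = t ^ (p * m) * t ^ (2:ℝ) * Real.exp (-(t ^ p)) := by ring
    · exact tendsto_aux hp _

lemma intG {p x : ℝ} (hp : 0 < p) (hx : 0 < x) (m : ℕ) :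
    IntegrableOn (Gf p x m) (Set.Ioi x) := by
  refine Iff.mp integrableOn_Ici_iff_integrableOn_Ioi
    (((contOn hx m).locallyIntegrableOn measurableSet_Ici).integrableOn_of_isBigO_atTop
      (bigO_G hp hx m) ⟨Set.Ioi x, Ioi_mem_atTop x, ?_⟩)
  exact integrableOn_Ioi_rpow_of_lt (by norm_num) hx

lemma hasDerivF {p x : ℝ} (hx : 0 < x) (m : ℕ) {t : ℝ} (ht : x < t) :
    HasDerivAt (fun t => (t ^ p - x ^ p) ^ m * (t * Real.exp (-(t ^ p))))
      (((m : ℝ) * p) * Gf p x m t + ((m : ℝ) * p * x ^ p) * Gf p x (m - 1) t + Gf p x m t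
        - p * Gf p x (m + 1) t - (p * x ^ p) * Gf p x m t) t := by
  have h0 : (0:ℝ) < t := lt_trans hx ht
  have hr : HasDerivAt (fun t : ℝ => t ^ p) (p * t ^ (p - 1)) t := by
    simpa [mul_comm] using Real.hasDerivAt_rpow_const (x := t) (p := p) (Or.inl h0.ne')
  have h1 : HasDerivAt (fun t : ℝ => (t ^ p - x ^ p) ^ m)
      ((m : ℝ) * (t ^ p - x ^ p) ^ (m - 1) * (p * t ^ (p - 1))) t :=
    (hr.sub_const _).pow m
  have h2 : HasDerivAt (fun t : ℝ => t * Real.exp (-(t ^ p)))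
      (1 * Real.exp (-(t ^ p)) + t * (Real.exp (-(t ^ p)) * -(p * t ^ (p - 1)))) t :=
    (hasDerivAt_id t).mul (hr.neg.exp)
  have := h1.mul h2
  refine this.congr_deriv (Eq.symm ?_)
  have htp : t ^ (p - 1) * t = t ^ p := by
    rw [← Real.rpow_add_one h0.ne', sub_add_cancel]
  simp only [Gf]
  cases m with
  | zero =>
    simp only [Nat.cast_zero, pow_zero, Nat.zero_sub]
    linear_combination (p * Real.exp (-(t ^ p))) * htp
  | succ n =>
    simp only [Nat.succ_sub_one, Nat.cast_succ, pow_succ]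
    linear_combination (p * (t ^ p - x ^ p) ^ n * (t ^ p - x ^ p) * Real.exp (-(t ^ p))
      - ((n : ℝ) + 1) * p * (t ^ p - x ^ p) ^ n * Real.exp (-(t ^ p))) * htp

noncomputable def Ig (p x : ℝ) (m : ℕ) : ℝ := ∫ t in Set.Ioi x, Gf p x m t

lemma contOnF {p x : ℝ} (hx : 0 < x) (m : ℕ) :
    ContinuousOn (fun t : ℝ => (t ^ p - x ^ p) ^ m * (t * Real.exp (-(t ^ p)))) (Set.Ici x) :=
  (((rpow_contOn hx).sub continuousOn_const).pow m).mul
    (continuousOn_id.mul (Real.continuous_exp.comp_continuousOn (rpow_contOn hx).neg))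

lemma tendstoF {p x : ℝ} (hp : 0 < p) (hx : 0 < x) (m : ℕ) :
    Tendsto (fun t : ℝ => (t ^ p - x ^ p) ^ m * (t * Real.exp (-(t ^ p)))) atTop (𝓝 0) := by
  apply squeeze_zero' (g := fun t : ℝ => t ^ (p * m + 1) * Real.exp (-(t ^ p)))
  · filter_upwards [eventually_ge_atTop x] with t ht
    have h0 : (0:ℝ) < t := lt_of_lt_of_le hx ht
    have := sub_rpow_nonneg hp hx ht
    positivity
  · filter_upwards [eventually_ge_atTop x] with t ht
    have h0 : (0:ℝ) < t := lt_of_lt_of_le hx ht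
    have h1 : (t ^ p - x ^ p) ^ m * (t * Real.exp (-(t ^ p)))
        = Gf p x m t * t := by simp only [Gf]; ring
    rw [h1, Real.rpow_add_one h0.ne' (p * m)]
    calc Gf p x m t * t ≤ (t ^ (p * m) * Real.exp (-(t ^ p))) * t :=
          mul_le_mul_of_nonneg_right (Gf_le hp hx m ht) h0.le
      _ = t ^ (p * m) * t * Real.exp (-(t ^ p)) := by ring
  · exact tendsto_aux hp _

lemma key {p x : ℝ} (hp : 0 < p) (hx : 0 < x) (m : ℕ) :
    ((m : ℝ) * p) * Ig p x m + ((m : ℝ) * p * x ^ p) * Ig p x (m - 1) + Ig p x m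
      - p * Ig p x (m + 1) - (p * x ^ p) * Ig p x m
      = -((0:ℝ) ^ m * (x * Real.exp (-(x ^ p)))) := by
  have hint : ∀ (c : ℝ) (k : ℕ), IntegrableOn (fun t => c * Gf p x k t) (Set.Ioi x) :=
    fun c k => (intG hp hx k).const_mul c
  have h := integral_Ioi_of_hasDerivAt_of_tendsto
    ((contOnF hx m) x Set.self_mem_Ici)
    (fun t ht => hasDerivF hx m ht)
    (((((hint _ m).add (hint _ (m-1))).add (intG hp hx m)).sub (hint p (m+1))).sub
      (hint _ m))
    (tendstoF hp hx m)
  rw [sub_self, zero_sub] at h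
  have i1 := hint ((m:ℝ)*p) m
  have i2 := hint ((m:ℝ)*p*x^p) (m-1)
  have i3 := intG hp hx m
  have i4 := hint p (m+1)
  have i5 := hint (p*x^p) m
  have iA : IntegrableOn (fun t => (m:ℝ) * p * Gf p x m t + (m:ℝ) * p * x ^ p * Gf p x (m-1) t
      + Gf p x m t) (Set.Ioi x) := (i1.add i2).add i3
  have iC : IntegrableOn (fun t => (m:ℝ) * p * Gf p x m t + (m:ℝ) * p * x ^ p * Gf p x (m-1) t)
      (Set.Ioi x) := i1.add i2
  have iB : IntegrableOn (fun t => (m:ℝ) * p * Gf p x m t + (m:ℝ) * p * x ^ p * Gf p x (m-1) t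
      + Gf p x m t - p * Gf p x (m+1) t) (Set.Ioi x) := iA.sub i4
  have e1 : (∫ t in Set.Ioi x, ((m:ℝ) * p * Gf p x m t + (m:ℝ) * p * x ^ p * Gf p x (m-1) t
        + Gf p x m t - p * Gf p x (m+1) t - p * x ^ p * Gf p x m t))
      = ((((∫ t in Set.Ioi x, Gf p x m t) * ((m:ℝ) * p)
        + (∫ t in Set.Ioi x, Gf p x (m-1) t) * ((m:ℝ) * p * x ^ p))
        + ∫ t in Set.Ioi x, Gf p x m t)
        - (∫ t in Set.Ioi x, Gf p x (m+1) t) * p)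
        - (∫ t in Set.Ioi x, Gf p x m t) * (p * x ^ p) := by
    rw [integral_sub iB i5, integral_sub iA i4, integral_add iC i3,
      integral_add i1 i2, integral_const_mul, integral_const_mul, integral_const_mul,
      integral_const_mul]
    ring
  rw [e1] at h
  simp only [Ig]
  linarith [h]

lemma Vp_nat (p x : ℝ) (m : ℕ) :
    (m.factorial : ℝ) * Vp p m x = p * Real.exp (x ^ p) * Ig p x m := by
  rw [Vp, if_neg (by push_cast; intro h; have := m.cast_nonneg (α := ℝ); linarith)]
  have hg : Real.Gamma ((m : ℝ) + 1) = (m.factorial : ℝ) := by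
    exact_mod_cast Real.Gamma_nat_eq_factorial m
  rw [hg, Ig]
  have : (fun t : ℝ => (t ^ p - x ^ p) ^ (m : ℝ) * Real.exp (-(t ^ p))) = Gf p x m := by
    funext t; rw [Gf, Real.rpow_natCast]
  rw [show (∫ t in Set.Ioi x, (t ^ p - x ^ p) ^ (m:ℝ) * Real.exp (-(t ^ p)))
      = ∫ t in Set.Ioi x, Gf p x m t from by rw [this]]
  have hfac : (m.factorial : ℝ) ≠ 0 := by exact_mod_cast m.factorial_ne_zero
  field_simp

lemma keyV0 {p x : ℝ} (hp : 0 < p) (hx : 0 < x) :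
    p * Vp p 1 x = (1 - p * x ^ p) * Vp p 0 x + p * x := by
  have k := key hp hx 0
  simp only [Nat.cast_zero, pow_zero, zero_mul, one_mul, zero_add, Nat.zero_sub] at k
  have A0 := Vp_nat p x 0
  have A1 := Vp_nat p x 1
  norm_num at A0 A1
  have he : Real.exp (x ^ p) * Real.exp (-(x ^ p)) = 1 := by
    rw [← Real.exp_add]; simp
  linear_combination p * A1 - (1 - p * x ^ p) * A0 + p * x * he - p * Real.exp (x ^ p) * k

lemma keyV1 {p x : ℝ} (hp : 0 < p) (hx : 0 < x) (j : ℕ) :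
    p * ((j : ℝ) + 2) * Vp p ((j : ℝ) + 2) x
      = (((j : ℝ) + 1) * p + 1 - p * x ^ p) * Vp p ((j : ℝ) + 1) x
        + p * x ^ p * Vp p (j : ℝ) x := by
  have k := key hp hx (j + 1)
  rw [zero_pow (Nat.succ_ne_zero j)] at k
  simp only [Nat.add_sub_cancel] at k
  push_cast at k
  have A := Vp_nat p x (j + 2)
  have B := Vp_nat p x (j + 1)
  have C := Vp_nat p x j
  rw [Nat.factorial_succ (j+1)] at A
  rw [Nat.factorial_succ j] at A B
  push_cast at A B C
  have hF : (j.factorial : ℝ) ≠ 0 := by exact_mod_cast j.factorial_ne_zero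
  have hj1 : ((j:ℝ) + 1) * (j.factorial : ℝ) ≠ 0 := by positivity
  apply mul_left_cancel₀ hj1
  linear_combination p * A - (((j:ℝ)+1)*p + 1 - p*x^p) * B - p * x^p * ((j:ℝ)+1) * C
    - p * Real.exp (x ^ p) * k

theorem stmt_14 (p x : ℝ) (hp : 0 < p) (hx : 0 < x) (m : ℕ) (hm : 1 ≤ m) :
    Vp p m x =
      (1 / (p * m)) *
        ((1 - p * x ^ p) * Vp p (m - 1 : ℕ) x +
          (∑ k ∈ Finset.range (m - 1), Vp p k x) + p * x ^ p * Vp p (-1) x) := by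
  have hVm1 : Vp p (-1) x = x ^ (1 - p) := by rw [Vp, if_pos rfl]
  have hQ : p * x ^ p * Vp p (-1) x = p * x := by
    rw [hVm1, mul_assoc, ← Real.rpow_add hx]
    norm_num
  induction m, hm using Nat.le_induction with
  | base =>
    simp only [Nat.cast_one, Nat.sub_self, Finset.range_zero, Finset.sum_empty, add_zero,
      Nat.cast_zero, zero_add, mul_one, hQ]
    have k := keyV0 hp hx
    have hpne : p ≠ 0 := hp.ne'
    field_simp
    linear_combination k
  | succ n hn ih =>
    obtain ⟨j, rfl⟩ := Nat.exists_eq_add_of_le' hn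
    have hkey := keyV1 hp hx j
    rw [hQ] at ih ⊢
    simp only [Nat.add_sub_cancel] at ih ⊢
    rw [Finset.sum_range_succ]
    push_cast at ih ⊢
    have h1 : p * ((j:ℝ) + 1) ≠ 0 := by positivity
    have h2 : p * ((j:ℝ) + 1 + 1) ≠ 0 := by positivity
    rw [one_div_mul_eq_div, eq_div_iff h1] at ih
    rw [one_div_mul_eq_div, eq_div_iff h2]
    ring_nf at hkey ih ⊢
    linear_combination hkey + ih
end

section
/- Let g_k(x) = k / ((k-1)x + sqrt(x^2 + k)) and V_0(x) = 2 e^{x^2} ∫_x^∞ e^{-t^2} dt. Then for all x ≥ 0, g_π(x) ≤ V_0(x) < g_4(x), with equality only at x = 0 in the lower bound. -/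
open Real MeasureTheory Set Filter

noncomputable def gaussI (x : ℝ) : ℝ := ∫ t in Set.Ioi x, Real.exp (-t ^ 2)

lemma integrable_gauss : Integrable (fun t : ℝ => Real.exp (-t ^ 2)) := by
  have := integrable_exp_neg_mul_sq (b := 1) one_pos
  simpa using this

lemma gaussI_eq (x : ℝ) : gaussI x = gaussI 0 - ∫ t in (0:ℝ)..x, Real.exp (-t ^ 2) := by
  have hI := integrable_gauss
  have h1 := intervalIntegral.integral_Iic_add_Ioi (b := (0:ℝ)) hI.integrableOn hI.integrableOn
  have h2 := intervalIntegral.integral_Iic_add_Ioi (b := x) hI.integrableOn hI.integrableOn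
  have h3 := intervalIntegral.integral_Iic_sub_Iic (f := fun t : ℝ => Real.exp (-t ^ 2))
    (μ := volume) (a := (0:ℝ)) (b := x) hI.integrableOn hI.integrableOn
  unfold gaussI
  linarith

lemma hasDerivAt_gaussI (x : ℝ) : HasDerivAt gaussI (-Real.exp (-x ^ 2)) x := by
  have hc : Continuous fun t : ℝ => Real.exp (-t ^ 2) := by fun_prop
  have h : HasDerivAt (fun y => ∫ t in (0:ℝ)..y, Real.exp (-t ^ 2)) (Real.exp (-x ^ 2)) x :=
    intervalIntegral.integral_hasDerivAt_right
      (integrable_gauss.intervalIntegrable)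
      (hc.stronglyMeasurableAtFilter _ _) hc.continuousAt
  have h2 := h.const_sub (gaussI 0)
  have heq : gaussI = fun y => gaussI 0 - ∫ t in (0:ℝ)..y, Real.exp (-t ^ 2) := funext gaussI_eq
  rw [heq]
  simpa using h2

noncomputable def g (k x : ℝ) : ℝ := k / ((k - 1) * x + Real.sqrt (x ^ 2 + k))

noncomputable def V₀ (x : ℝ) : ℝ :=
  2 * Real.exp (x ^ 2) * ∫ t in Set.Ioi x, Real.exp (-t ^ 2)

noncomputable def U (k y : ℝ) : ℝ := 2 * gaussI y - g k y * Real.exp (-y ^ 2)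

lemma hasDerivAt_g (k : ℝ) (hk : 0 < k) (hk1 : 1 ≤ k) {x : ℝ} (hx : 0 ≤ x) :
    HasDerivAt (g k)
      (-(k * ((k - 1) + x / Real.sqrt (x ^ 2 + k))) / ((k - 1) * x + Real.sqrt (x ^ 2 + k)) ^ 2)
      x := by
  have hpos : 0 < x ^ 2 + k := by positivity
  have hs0 : 0 < Real.sqrt (x ^ 2 + k) := Real.sqrt_pos.mpr hpos
  have h1 : HasDerivAt (fun y : ℝ => y ^ 2 + k) (2 * x) x := by
    simpa using (hasDerivAt_pow 2 x).add_const k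
  have h2 : HasDerivAt (fun y : ℝ => Real.sqrt (y ^ 2 + k)) (x / Real.sqrt (x ^ 2 + k)) x := by
    have := (Real.hasDerivAt_sqrt (ne_of_gt hpos)).comp x h1
    refine this.congr_deriv ?_
    field_simp
  have hD : HasDerivAt (fun y : ℝ => (k - 1) * y + Real.sqrt (y ^ 2 + k))
      ((k - 1) + x / Real.sqrt (x ^ 2 + k)) x := by
    exact (((hasDerivAt_id x).const_mul (k - 1)).add h2).congr_deriv (by simp)
  have hD0 : (k - 1) * x + Real.sqrt (x ^ 2 + k) ≠ 0 := by
    have : 0 ≤ (k - 1) * x := mul_nonneg (by linarith) hx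
    positivity
  have := (hasDerivAt_const x k).div hD hD0
  unfold g
  exact this.congr_deriv (by ring)

lemma phi_eq (k x : ℝ) (hk : 0 < k) (hk1 : 1 ≤ k) (hx : 0 ≤ x) :
    2 * x * g k x - 2
        - (-(k * ((k - 1) + x / Real.sqrt (x ^ 2 + k)))
            / ((k - 1) * x + Real.sqrt (x ^ 2 + k)) ^ 2)
      = k ^ 2 * ((k - 3) * Real.sqrt (x ^ 2 + k) - x)
          / (((k - 1) * x + Real.sqrt (x ^ 2 + k)) ^ 2 * Real.sqrt (x ^ 2 + k)
              * (Real.sqrt (x ^ 2 + k) + x) ^ 2) := by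
  have hpos : 0 < x ^ 2 + k := by positivity
  set s := Real.sqrt (x ^ 2 + k) with hs
  have hs0 : 0 < s := Real.sqrt_pos.mpr hpos
  have hs2 : s ^ 2 = x ^ 2 + k := Real.sq_sqrt hpos.le
  have hD0 : 0 < (k - 1) * x + s := by
    have : 0 ≤ (k - 1) * x := mul_nonneg (by linarith) hx
    linarith
  have hsx : 0 < s + x := by linarith
  unfold g
  rw [← hs]
  have hD1 : x * (k - 1) + s ≠ 0 := by linarith
  field_simp
  rw [show k = s ^ 2 - x ^ 2 by linarith]
  ring
  -- old: linear_combination ((-2) * s ^ 7 + (6) * x * s ^ 6 - (4) * x ^ 2 * s ^ 5 - (4) * x ^ 3 * s ^ 4 + (6) * x ^ 4 * s ^ 3 - (2) * x ^ 5 * s ^ 2 - (3) * k * s ^ 5 + (8) * k * x * s ^ 4 - (8) * k * x * s ^ 6 - (6) * k * x ^ 2 * s ^ 3 + (16) * k * x ^ 2 * s ^ 5 + k * x ^ 4 * s - (16) * k * x ^ 4 * s ^ 3 + (8) * k * x ^ 5 * s ^ 2 + k ^ 2 * s ^ 5 - (12) * k ^ 2 * x * s ^ 4 + (18) * k ^ 2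 * x ^ 2 * s ^ 3 - (12) * k ^ 2 * x ^ 2 * s ^ 5 - (4) * k ^ 2 * x ^ 3 * s ^ 2 + (12) * k ^ 2 * x ^ 3 * s ^ 4 - (3) * k ^ 2 * x ^ 4 * s + (12) * k ^ 2 * x ^ 4 * s ^ 3 - (12) * k ^ 2 * x ^ 5 * s ^ 2 + (3) * k ^ 3 * x * s ^ 4 - (15) * k ^ 3 * x ^ 2 * s ^ 3 + (9) * k ^ 3 * x ^ 3 * s ^ 2 - (8) * k ^ 3 * x ^ 3 * s ^ 4 + (3) * k ^ 3 * x ^ 4 * s + (8) * k ^ 3 * x ^ 5 * s ^ 2 + (3) * k ^ 4 * x ^ 2 * s ^ 3 - (6) * k ^ 4 * x ^ 3 * s ^ 2 - (1) * k ^ 4 * x ^ 4 * s - (2) * k ^ 4 * x ^ 4 * s ^ 3 - (2) * k ^ 4 * x ^ 5 * s ^ 2 + k ^ 5 * x ^ 3 * s ^ 2) * hs2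

lemma hasDerivAt_U (k : ℝ) (hk : 0 < k) (hk1 : 1 ≤ k) {x : ℝ} (hx : 0 ≤ x) :
    HasDerivAt (U k)
      (k ^ 2 * ((k - 3) * Real.sqrt (x ^ 2 + k) - x)
          / (((k - 1) * x + Real.sqrt (x ^ 2 + k)) ^ 2 * Real.sqrt (x ^ 2 + k)
              * (Real.sqrt (x ^ 2 + k) + x) ^ 2) * Real.exp (-x ^ 2)) x := by
  have hI := (hasDerivAt_gaussI x).const_mul 2
  have hg := hasDerivAt_g k hk hk1 hx
  have h1 : HasDerivAt (fun y : ℝ => -y ^ 2) (-(2 * x)) x := by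
    exact (hasDerivAt_pow 2 x).neg.congr_deriv (by simp)
  have he := h1.exp
  have hU := hI.sub (hg.mul he)
  have key := phi_eq k x hk hk1 hx
  unfold U
  refine hU.congr_deriv ?_
  rw [← key]
  unfold g
  ring

lemma tendsto_exp_neg_sq : Tendsto (fun x : ℝ => Real.exp (-x ^ 2)) atTop (nhds 0) := by
  have h1 : Tendsto (fun x : ℝ => -x ^ 2) atTop atBot :=
    tendsto_neg_atBot_iff.mpr (tendsto_pow_atTop two_ne_zero)
  exact Real.tendsto_exp_atBot.comp h1

lemma gaussI_nonneg (x : ℝ) : 0 ≤ gaussI x :=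
  setIntegral_nonneg measurableSet_Ioi fun t _ => (Real.exp_nonneg _)

lemma tendsto_gaussI : Tendsto gaussI atTop (nhds 0) := by
  have hup : ∀ x : ℝ, 1 ≤ x → gaussI x ≤ Real.exp (-x) := by
    intro x hx1
    have hint : IntegrableOn (fun t : ℝ => Real.exp (-t)) (Ioi x) := by
      simpa using exp_neg_integrableOn_Ioi x one_pos
    have hmono : gaussI x ≤ ∫ t in Ioi x, Real.exp (-t) := by
      refine setIntegral_mono_on (integrable_gauss.integrableOn) hint measurableSet_Ioi ?_
      intro t ht
      have ht' : 1 ≤ t := le_trans hx1 (le_of_lt ht)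
      exact Real.exp_le_exp.mpr (by nlinarith)
    rw [integral_exp_neg_Ioi] at hmono
    exact hmono
  have hlim : Tendsto (fun x : ℝ => Real.exp (-x)) atTop (nhds 0) :=
    Real.tendsto_exp_atBot.comp (tendsto_neg_atBot_iff.mpr tendsto_id)
  refine tendsto_of_tendsto_of_tendsto_of_le_of_le' tendsto_const_nhds hlim ?_ ?_
  · exact Eventually.of_forall fun x => gaussI_nonneg x
  · filter_upwards [eventually_ge_atTop (1 : ℝ)] with x hx using hup x hx

lemma g_nonneg (k : ℝ) (hk : 0 < k) (hk1 : 1 ≤ k) {x : ℝ} (hx : 0 ≤ x) : 0 ≤ g k x := by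
  unfold g
  have hs0 : 0 < Real.sqrt (x ^ 2 + k) := Real.sqrt_pos.mpr (by positivity)
  have : 0 ≤ (k - 1) * x := mul_nonneg (by linarith) hx
  positivity

lemma g_le (k : ℝ) (hk : 0 < k) (hk1 : 1 ≤ k) {x : ℝ} (hx : 0 ≤ x) : g k x ≤ Real.sqrt k := by
  unfold g
  have hsk : 0 < Real.sqrt k := Real.sqrt_pos.mpr hk
  have hs : Real.sqrt k ≤ Real.sqrt (x ^ 2 + k) := Real.sqrt_le_sqrt (by nlinarith)
  have hD : Real.sqrt k ≤ (k - 1) * x + Real.sqrt (x ^ 2 + k) := by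
    have : 0 ≤ (k - 1) * x := mul_nonneg (by linarith) hx
    linarith
  calc k / ((k - 1) * x + Real.sqrt (x ^ 2 + k)) ≤ k / Real.sqrt k :=
        div_le_div_of_nonneg_left hk.le hsk hD
    _ = Real.sqrt k := Real.div_sqrt

lemma tendsto_U (k : ℝ) (hk : 0 < k) (hk1 : 1 ≤ k) : Tendsto (U k) atTop (nhds 0) := by
  have h1 : Tendsto (fun y => 2 * gaussI y) atTop (nhds 0) := by
    simpa using tendsto_gaussI.const_mul 2
  have h2 : Tendsto (fun y => g k y * Real.exp (-y ^ 2)) atTop (nhds 0) := by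
    have hbd : Tendsto (fun y : ℝ => Real.sqrt k * Real.exp (-y ^ 2)) atTop (nhds 0) := by
      simpa using tendsto_exp_neg_sq.const_mul (Real.sqrt k)
    refine tendsto_of_tendsto_of_tendsto_of_le_of_le' tendsto_const_nhds hbd ?_ ?_
    · filter_upwards [eventually_ge_atTop (0 : ℝ)] with y hy
      exact mul_nonneg (g_nonneg k hk hk1 hy) (Real.exp_nonneg _)
    · filter_upwards [eventually_ge_atTop (0 : ℝ)] with y hy
      exact mul_le_mul_of_nonneg_right (g_le k hk hk1 hy) (Real.exp_nonneg _)
  exact (by simpa using h1.sub h2 :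
    Tendsto (fun y => 2 * gaussI y - g k y * Real.exp (-y ^ 2)) atTop (nhds 0))

lemma c_anti {y z : ℝ} (hy : 0 ≤ y) (hyz : y < z) :
    (Real.pi - 3) * Real.sqrt (z ^ 2 + Real.pi) - z
      < (Real.pi - 3) * Real.sqrt (y ^ 2 + Real.pi) - y := by
  have hpi := Real.pi_gt_three
  have hpi4 := Real.pi_lt_four
  have hy2 : (0:ℝ) < y ^ 2 + Real.pi := by positivity
  have hz2 : (0:ℝ) < z ^ 2 + Real.pi := by positivity
  have hsy2 : Real.sqrt (y ^ 2 + Real.pi) ^ 2 = y ^ 2 + Real.pi := Real.sq_sqrt hy2.le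
  have hsz2 : Real.sqrt (z ^ 2 + Real.pi) ^ 2 = z ^ 2 + Real.pi := Real.sq_sqrt hz2.le
  have hsy_ge : y ≤ Real.sqrt (y ^ 2 + Real.pi) := by
    nlinarith [Real.sqrt_nonneg (y ^ 2 + Real.pi), Real.pi_pos]
  have hsz_ge : z ≤ Real.sqrt (z ^ 2 + Real.pi) := by
    nlinarith [Real.sqrt_nonneg (z ^ 2 + Real.pi), Real.pi_pos]
  have hmono : Real.sqrt (y ^ 2 + Real.pi) ≤ Real.sqrt (z ^ 2 + Real.pi) :=
    Real.sqrt_le_sqrt (by nlinarith)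
  have h1 : (Real.sqrt (z ^ 2 + Real.pi) - Real.sqrt (y ^ 2 + Real.pi))
      * (Real.sqrt (z ^ 2 + Real.pi) + Real.sqrt (y ^ 2 + Real.pi)) = (z - y) * (z + y) := by
    linear_combination hsz2 - hsy2
  have hzy : 0 < z + y := by linarith
  have hd : Real.sqrt (z ^ 2 + Real.pi) - Real.sqrt (y ^ 2 + Real.pi) ≤ z - y := by
    nlinarith [mul_le_mul_of_nonneg_left (by linarith : z + y ≤ Real.sqrt (z ^ 2 + Real.pi) + Real.sqrt (y ^ 2 + Real.pi)) (by linarith : (0:ℝ) ≤ Real.sqrt (z ^ 2 + Real.pi) - Real.sqrt (y ^ 2 + Real.pi))]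
  nlinarith [mul_le_mul_of_nonneg_left hd (by linarith : (0:ℝ) ≤ Real.pi - 3)]

lemma deriv_U_sign (k : ℝ) (hk : 0 < k) (hk1 : 1 ≤ k) {y : ℝ} (hy : 0 ≤ y) :
    deriv (U k) y
      = k ^ 2 * ((k - 3) * Real.sqrt (y ^ 2 + k) - y)
          / (((k - 1) * y + Real.sqrt (y ^ 2 + k)) ^ 2 * Real.sqrt (y ^ 2 + k)
              * (Real.sqrt (y ^ 2 + k) + y) ^ 2) * Real.exp (-y ^ 2) :=
  (hasDerivAt_U k hk hk1 hy).deriv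

lemma den_pos (k : ℝ) (hk : 0 < k) (hk1 : 1 ≤ k) {y : ℝ} (hy : 0 ≤ y) :
    0 < ((k - 1) * y + Real.sqrt (y ^ 2 + k)) ^ 2 * Real.sqrt (y ^ 2 + k)
        * (Real.sqrt (y ^ 2 + k) + y) ^ 2 := by
  have hs0 : 0 < Real.sqrt (y ^ 2 + k) := Real.sqrt_pos.mpr (by positivity)
  have hD : 0 < (k - 1) * y + Real.sqrt (y ^ 2 + k) := by
    have : 0 ≤ (k - 1) * y := mul_nonneg (by linarith) hy
    linarith
  have hsx : 0 < Real.sqrt (y ^ 2 + k) + y := by linarith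
  exact mul_pos (mul_pos (pow_pos hD 2) hs0) (pow_pos hsx 2)

lemma U4_neg {x : ℝ} (hx : 0 ≤ x) : U 4 x < 0 := by
  have hmono : StrictMonoOn (U 4) (Ici 0) := by
    refine strictMonoOn_of_deriv_pos (convex_Ici 0) ?_ ?_
    · intro y hy
      exact (hasDerivAt_U 4 (by norm_num) (by norm_num) hy).continuousAt.continuousWithinAt
    · intro y hy
      rw [interior_Ici] at hy
      have hy0 : (0:ℝ) ≤ y := hy.le
      rw [deriv_U_sign 4 (by norm_num) (by norm_num) hy0]
      have hs0 : 0 < Real.sqrt (y ^ 2 + 4) := Real.sqrt_pos.mpr (by positivity)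
      have hsy : y < Real.sqrt (y ^ 2 + 4) := by
        nlinarith [Real.sq_sqrt (show (0:ℝ) ≤ y ^ 2 + 4 by positivity)]
      have hnum : 0 < (4:ℝ) ^ 2 * ((4 - 3) * Real.sqrt (y ^ 2 + 4) - y) := by nlinarith
      exact mul_pos (div_pos hnum (den_pos 4 (by norm_num) (by norm_num) hy0)) (Real.exp_pos _)
  have hle : U 4 (x + 1) ≤ 0 := by
    refine ge_of_tendsto (tendsto_U 4 (by norm_num) (by norm_num)) ?_
    filter_upwards [eventually_ge_atTop (x + 2)] with z hz
    have h1 : x + 1 < z := by linarith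
    exact (hmono (by simp only [mem_Ici]; linarith) (by simp only [mem_Ici]; linarith) h1).le
  have := hmono (mem_Ici.mpr hx) (mem_Ici.mpr (by linarith)) (by linarith : x < x + 1)
  linarith

lemma U_pi_zero : U Real.pi 0 = 0 := by
  have hg0 : gaussI 0 = Real.sqrt Real.pi / 2 := by
    have h := integral_gaussian_Ioi 1
    unfold gaussI
    simpa using h
  have hgpi : g Real.pi 0 = Real.sqrt Real.pi := by
    unfold g
    simp [Real.div_sqrt]
  unfold U
  rw [hg0, hgpi]
  norm_num
  ring

lemma U_pi_pos {x : ℝ} (hx : 0 < x) : 0 < U Real.pi x := by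
  have hpi := Real.pi_gt_three
  have hpi0 := Real.pi_pos
  by_cases hc : 0 ≤ (Real.pi - 3) * Real.sqrt (x ^ 2 + Real.pi) - x
  · have hmono : StrictMonoOn (U Real.pi) (Icc 0 x) := by
      refine strictMonoOn_of_deriv_pos (convex_Icc 0 x) ?_ ?_
      · intro y hy
        exact (hasDerivAt_U Real.pi hpi0 (by linarith) hy.1).continuousAt.continuousWithinAt
      · intro y hy
        rw [interior_Icc] at hy
        have hy0 : (0:ℝ) ≤ y := hy.1.le
        rw [deriv_U_sign Real.pi hpi0 (by linarith) hy0]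
        have hcy : 0 < (Real.pi - 3) * Real.sqrt (y ^ 2 + Real.pi) - y :=
          lt_of_le_of_lt hc (c_anti hy0 hy.2)
        have hnum : 0 < Real.pi ^ 2 * ((Real.pi - 3) * Real.sqrt (y ^ 2 + Real.pi) - y) :=
          mul_pos (pow_pos hpi0 2) hcy
        exact mul_pos (div_pos hnum (den_pos Real.pi hpi0 (by linarith) hy0)) (Real.exp_pos _)
    have := hmono (left_mem_Icc.mpr hx.le) (right_mem_Icc.mpr hx.le) hx
    rw [U_pi_zero] at this
    exact this
  · push_neg at hc
    have hanti : StrictAntiOn (U Real.pi) (Ici x) := by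
      refine strictAntiOn_of_deriv_neg (convex_Ici x) ?_ ?_
      · intro y hy
        have hy0 : (0:ℝ) ≤ y := le_trans hx.le hy
        exact (hasDerivAt_U Real.pi hpi0 (by linarith) hy0).continuousAt.continuousWithinAt
      · intro y hy
        rw [interior_Ici] at hy
        have hy0 : (0:ℝ) ≤ y := le_trans hx.le hy.le
        rw [deriv_U_sign Real.pi hpi0 (by linarith) hy0]
        have hcy : (Real.pi - 3) * Real.sqrt (y ^ 2 + Real.pi) - y < 0 :=
          lt_trans (c_anti hx.le hy) hc
        have hnum : Real.pi ^ 2 * ((Real.pi - 3) * Real.sqrt (y ^ 2 + Real.pi) - y) < 0 :=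
          mul_neg_of_pos_of_neg (pow_pos hpi0 2) hcy
        exact mul_neg_of_neg_of_pos
          (div_neg_of_neg_of_pos hnum (den_pos Real.pi hpi0 (by linarith) hy0)) (Real.exp_pos _)
    have hge : 0 ≤ U Real.pi (x + 1) := by
      refine le_of_tendsto (tendsto_U Real.pi hpi0 (by linarith)) ?_
      filter_upwards [eventually_ge_atTop (x + 2)] with z hz
      have h1 : x + 1 < z := by linarith
      exact (hanti (by simp only [mem_Ici]; linarith) (by simp only [mem_Ici]; linarith) h1).le
    have := hanti (mem_Ici.mpr le_rfl) (mem_Ici.mpr (by linarith)) (by linarith : x < x + 1)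
    linarith

lemma U_rel (k x : ℝ) : U k x = Real.exp (-x ^ 2) * (V₀ x - g k x) := by
  unfold U V₀ gaussI
  have h1 : Real.exp (-x ^ 2) * Real.exp (x ^ 2) = 1 := by
    rw [← Real.exp_add]; simp
  set I' := ∫ t in Set.Ioi x, Real.exp (-t ^ 2) with hI'
  linear_combination (-2 * I') * h1

theorem stmt_19 (x : ℝ) (hx : 0 ≤ x) :
    g Real.pi x ≤ V₀ x ∧ V₀ x < g 4 x ∧ (g Real.pi x = V₀ x → x = 0) := by
  have hE : 0 < Real.exp (-x ^ 2) := Real.exp_pos _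
  have h4 := U4_neg hx
  rw [U_rel 4 x] at h4
  have hub : V₀ x < g 4 x := by nlinarith
  rcases hx.eq_or_lt with heq | hlt
  · subst heq
    have h0 := U_pi_zero
    rw [U_rel Real.pi 0] at h0
    have heq2 : V₀ 0 - g Real.pi 0 = 0 := by
      rcases mul_eq_zero.mp h0 with h | h
      · exact absurd h (ne_of_gt (Real.exp_pos _))
      · exact h
    exact ⟨by linarith, hub, fun _ => rfl⟩
  · have hpos := U_pi_pos hlt
    rw [U_rel Real.pi x] at hpos
    have hlb : g Real.pi x < V₀ x := by nlinarith
    exact ⟨hlb.le, hub, fun h => absurd h (by linarith)⟩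
end
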